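/- arXiv:2508.18487 — 6 statements merged into one kernel-verified Lean document; each statement's English description precedes it below -/
import Mathlib

section
/- For all integers n ≥ 2k ≥ 4, the map that deletes the largest element of each stable k-subset of [n] is a graph homomorphism from the Schrijver graph SG(n, k) to the Schrijver graph SG(n−2, k−1). -/
universe u

/-- An orientation of a simple graph: each edge receives exactly one of its two directions. -/
structure GraphOrientation {V : Type u} (G : SimpleGraph V) where
  dir : V → V → Prop
  adj_iff : ∀ u v, G.Adj u v ↔ (dir u v ∨ dir v u)
  asymm : ∀ u v, dir u v → ¬ dir v u

/-- The closed out-neighborhood of a vertex in an orientation. -/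
def GraphOrientation.closedOutNbhd {V : Type u} {G : SimpleGraph V}
    (D : GraphOrientation G) (v : V) : Set V :=
  insert v {u | D.dir v u}

/-- The directed local chromatic number of an oriented graph: the least `n` such that some
proper coloring of the underlying graph puts at most `n` colors on every closed
out-neighborhood. -/
noncomputable def psiD {V : Type u} {G : SimpleGraph V} (D : GraphOrientation G) : ℕ∞ :=
  sInf {n : ℕ∞ | ∃ c : V → ℕ, (∀ u w, G.Adj u w → c u ≠ c w) ∧
    ∀ v, (c '' D.closedOutNbhd v).encard ≤ n}

/-- `ψ_{d,min}`: the minimum of `ψ_d` over all orientations of `G`. -/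
noncomputable def psiDMin {V : Type u} (G : SimpleGraph V) : ℕ∞ :=
  ⨅ D : GraphOrientation G, psiD D

/-- `f : ZMod n → V` describes a cycle of length `n` in `G`. -/
def SimpleGraph.IsCycleMap {V : Type u} (G : SimpleGraph V) {n : ℕ} (f : ZMod n → V) : Prop :=
  Function.Injective f ∧ ∀ i, G.Adj (f i) (f (i + 1))

/-- The cycle described by `f` is alternating with respect to the direction relation `D`:
exactly one of its vertices is neither a source nor a sink of the cycle. -/
def IsAltCycle {V : Type u} (D : V → V → Prop) {n : ℕ} (f : ZMod n → V) : Prop :=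
  ∃! i : ZMod n,
    ¬ ((D (f i) (f (i - 1)) ∧ D (f i) (f (i + 1))) ∨
       (D (f (i - 1)) (f i) ∧ D (f (i + 1)) (f i)))

/-- The orientation `D` of `G` contains an alternating odd cycle. -/
def HasAltOddCycle {V : Type u} {G : SimpleGraph V} (D : GraphOrientation G) : Prop :=
  ∃ (n : ℕ) (f : ZMod n → V), Odd n ∧ G.IsCycleMap f ∧ IsAltCycle D.dir f

/-- The odd girth of `G`: the length of a shortest odd cycle. -/
noncomputable def oddGirth {V : Type u} (G : SimpleGraph V) : ℕ :=
  sInf {n | Odd n ∧ ∃ f : ZMod n → V, G.IsCycleMap f}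

/-- The symmetric shift graph `S_m`. -/
def shiftGraph (m : ℕ) : SimpleGraph {p : Fin m × Fin m // p.1 ≠ p.2} where
  Adj x y := x.1.2 = y.1.1 ∨ x.1.1 = y.1.2
  symm := ⟨fun _ _ h => h.elim (fun h => Or.inr h.symm) (fun h => Or.inl h.symm)⟩
  loopless := ⟨fun x h => h.elim (fun h => x.2 h.symm) (fun h => x.2 h)⟩

/-- The Kneser graph `KG(n,k)`. -/
def kneserGraph (n k : ℕ) : SimpleGraph {A : Finset (Fin n) // A.card = k} where
  Adj A B := Disjoint A.1 B.1 ∧ A ≠ B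
  symm := ⟨fun _ _ h => ⟨h.1.symm, h.2.symm⟩⟩
  loopless := ⟨fun _ h => h.2 rfl⟩

/-- A subset of `Fin n` (thought of as `[n]` arranged cyclically) is stable if it contains
no two cyclically consecutive elements. -/
def IsStableSet {n : ℕ} (A : Finset (Fin n)) : Prop :=
  ∀ i ∈ A, ∀ j ∈ A, (i.val + 1) % n ≠ j.val

/-- The Schrijver graph `SG(n,k)`. -/
def schrijverGraph (n k : ℕ) :
    SimpleGraph {A : Finset (Fin n) // A.card = k ∧ IsStableSet A} where
  Adj A B := Disjoint A.1 B.1 ∧ A ≠ B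
  symm := ⟨fun _ _ h => ⟨h.1.symm, h.2.symm⟩⟩
  loopless := ⟨fun _ h => h.2 rfl⟩

/-- The `r`-level generalized Mycielskian `M_r(G)`; `none` is the apex vertex `z`. -/
def genMycielskian {V : Type u} (G : SimpleGraph V) (r : ℕ) :
    SimpleGraph (Option (V × Fin r)) where
  Adj x y :=
    match x, y with
    | some (u, i), some (v, j) =>
        G.Adj u v ∧ (i.val + 1 = j.val ∨ j.val + 1 = i.val ∨ (i.val = 0 ∧ j.val = 0))
    | some (_, i), none => i.val = r - 1
    | none, some (_, j) => j.val = r - 1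
    | none, none => False
  symm := by
    constructor
    rintro (_ | ⟨u, i⟩) (_ | ⟨v, j⟩) h
    · exact h
    · exact h
    · exact h
    · exact ⟨h.1.symm, by tauto⟩
  loopless := by
    constructor
    rintro (_ | ⟨u, i⟩) h
    · exact h
    · exact G.loopless.irrefl u h.1


/-!
If `m` is the largest element of a stable set `A ⊆ [n]`, every other element of `A` is at most
`m - 2 ≤ n - 2`, so `A \ {m}` lives in `[n - 2]`. It is stable there: the only new cyclic
adjacency is `{n - 2, 1}`, and `n - 2 ∈ A` forces `m = n`, but `{n, 1} ⊆ A` is already forbidden.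
Deleting elements preserves disjointness, and `A \ {m}` is nonempty because `k ≥ 2`.
-/

open Finset

/-- Elements of `A.erase (A.max' hA)` that do not fit into `Fin (n - 2)` are dropped; for stable `A`
there are none (`image_deleteMax`). -/
noncomputable def deleteMax {n : ℕ} (A : Finset (Fin n)) (hA : A.Nonempty) :
    Finset (Fin (n - 2)) :=
  (A.erase (A.max' hA)).preimage (Fin.castLE (n.sub_le 2)) (Fin.castLE_injective _).injOn

theorem disjoint_deleteMax {n : ℕ} {A B : Finset (Fin n)} (hAB : Disjoint A B)
    (hA : A.Nonempty) (hB : B.Nonempty) : Disjoint (deleteMax A hA) (deleteMax B hB) := by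
  simp only [deleteMax, Finset.disjoint_left, mem_preimage, mem_erase]
  exact fun _ hxA hxB => Finset.disjoint_left.mp hAB hxA.2 hxB.2

section StableSet

variable {n : ℕ} {A : Finset (Fin n)}

theorem IsStableSet.val_add_one_lt (hA : IsStableSet A) {x y : Fin n} (hx : x ∈ A)
    (hy : y ∈ A) (hxy : x < y) : x.val + 1 < y.val := by
  have hsucc := hA x hx y hy
  rw [Fin.lt_def] at hxy
  rw [Nat.mod_eq_of_lt (by omega)] at hsucc
  omega

theorem IsStableSet.val_add_one_lt_max' (hA : IsStableSet A) (hne : A.Nonempty) {x : Fin n}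
    (hx : x ∈ A.erase (A.max' hne)) : x.val + 1 < (A.max' hne).val := by
  obtain ⟨hxm, hxA⟩ := mem_erase.mp hx
  exact hA.val_add_one_lt hxA (A.max'_mem hne) (lt_of_le_of_ne (A.le_max' x hxA) hxm)

theorem image_deleteMax (hA : IsStableSet A) (hne : A.Nonempty) :
    (deleteMax A hne).image (Fin.castLE (n.sub_le 2)) = A.erase (A.max' hne) := by
  rw [deleteMax, image_preimage]
  refine filter_true_of_mem fun x hx => ⟨⟨x.val, ?_⟩, rfl⟩
  have := hA.val_add_one_lt_max' hne hx
  omega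

theorem card_deleteMax (hA : IsStableSet A) (hne : A.Nonempty) :
    (deleteMax A hne).card = A.card - 1 := by
  rw [← card_image_of_injective _ (Fin.castLE_injective (n.sub_le 2)), image_deleteMax hA,
    card_erase_of_mem (A.max'_mem hne)]

theorem isStableSet_deleteMax (hA : IsStableSet A) (hne : A.Nonempty) :
    IsStableSet (deleteMax A hne) := by
  intro i hi j hj hij
  have hi_lt := hA.val_add_one_lt_max' hne (mem_preimage.mp hi)
  have hiA := (mem_erase.mp (mem_preimage.mp hi)).2
  have hjA := (mem_erase.mp (mem_preimage.mp hj)).2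
  have hm := (A.max' hne).isLt
  simp only [Fin.val_castLE] at hi_lt
  by_cases hwrap : i.val + 1 < n - 2
  · rw [Nat.mod_eq_of_lt hwrap] at hij
    refine hA _ hiA _ hjA ?_
    rw [Fin.val_castLE, Fin.val_castLE, Nat.mod_eq_of_lt (by omega)]
    exact hij
  · -- `i = n - 3` wraps around to `j = 0`, and then the maximum is `n - 1`, adjacent to `0`
    have hj0 : j.val = 0 := by
      rw [← hij, show i.val + 1 = n - 2 by omega, Nat.mod_self]
    refine hA _ (A.max'_mem hne) _ hjA ?_
    rw [Fin.val_castLE, hj0, show (A.max' hne).val + 1 = n by omega, Nat.mod_self]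

end StableSet

theorem schrijverGraph_adj_iff_disjoint {n k : ℕ} (hk : 0 < k)
    {A B : {A : Finset (Fin n) // A.card = k ∧ IsStableSet A}} :
    (schrijverGraph n k).Adj A B ↔ Disjoint A.1 B.1 := by
  refine ⟨And.left, fun hAB => ⟨hAB, fun hEq => ?_⟩⟩
  rw [hEq, disjoint_self, bot_eq_empty] at hAB
  exact hk.ne' (by rw [← B.2.1, hAB, card_empty])

noncomputable def schrijverDeleteMax (n k : ℕ) (hk : 2 ≤ k) :
    schrijverGraph n k →g schrijverGraph (n - 2) (k - 1) where
  toFun A := ⟨deleteMax A.1 (card_pos.mp (A.2.1.symm ▸ Nat.zero_lt_of_lt hk)),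
    by rw [card_deleteMax A.2.2, A.2.1], isStableSet_deleteMax A.2.2 _⟩
  map_rel' hAB := (schrijverGraph_adj_iff_disjoint (by omega)).mpr (disjoint_deleteMax hAB.1 _ _)

theorem statement4 (n k : ℕ) (hk : 2 ≤ k) :
    ∃ φ : schrijverGraph n k →g schrijverGraph (n - 2) (k - 1),
      ∀ A : {A : Finset (Fin n) // A.card = k ∧ IsStableSet A},
        Finset.image (Fin.castLE (by omega : n - 2 ≤ n)) (φ A).1 =
          A.1.erase (A.1.max' (Finset.card_pos.mp (by rw [A.2.1]; omega))) :=
  ⟨schrijverDeleteMax n k hk, fun A => image_deleteMax A.2.2 _⟩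
end

section
/- For all integers r₁, r₂ ≥ 2, there exists a graph homomorphism from the iterated generalized Mycielskian M_{r₂}(M_{r₁}(K₂)) to the symmetric shift graph S_4; consequently ψ_{d,min}(M_{r₂}(M_{r₁}(K₂))) = 2. -/
universe u

/-! A homomorphism `f : G →g S_m` orients every edge `uv` from `u` to `v` when the head of
`f u` is the tail of `f v`; colouring each vertex by the tail of its label then puts only the
two coordinates of `f v` on the closed out-neighbourhood of `v`. Since
`M_{r₂}(M_{r₁}(K₂))` has an edge, this gives `ψ_{d,min} = 2` once it maps to `S_4`. That map
factors as `M_{r₂}(M_{r₁}(K₂)) → M_{r₂}(C₅) → S_4`: the first factor applies `M_{r₂}` to a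
homomorphism from the odd cycle `M_{r₁}(K₂)` onto `C₅`, the second is given by a finite table. -/

section PsiD

variable {V : Type u} {G : SimpleGraph V}

theorem two_le_encard_image_closedOutNbhd (D : GraphOrientation G) {c : V → ℕ}
    (hc : ∀ u w, G.Adj u w → c u ≠ c w) {a b : V} (hab : D.dir a b) :
    2 ≤ (c '' D.closedOutNbhd a).encard := by
  have hsub : ({c a, c b} : Set ℕ) ⊆ c '' D.closedOutNbhd a := by
    rintro x (rfl | rfl)
    · exact ⟨a, Set.mem_insert a _, rfl⟩
    · exact ⟨b, Set.mem_insert_of_mem a hab, rfl⟩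
  calc (2 : ℕ∞) = ({c a, c b} : Set ℕ).encard :=
        (Set.encard_pair (hc a b ((D.adj_iff a b).2 (Or.inl hab)))).symm
    _ ≤ _ := Set.encard_mono hsub

theorem two_le_psiD_of_adj (D : GraphOrientation G) {a b : V} (h : G.Adj a b) :
    2 ≤ psiD D := by
  refine le_sInf ?_
  rintro n ⟨c, hc, hn⟩
  rcases (D.adj_iff a b).1 h with hab | hba
  · exact (two_le_encard_image_closedOutNbhd D hc hab).trans (hn a)
  · exact (two_le_encard_image_closedOutNbhd D hc hba).trans (hn b)

theorem two_le_psiDMin_of_adj {a b : V} (h : G.Adj a b) : 2 ≤ psiDMin G :=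
  le_iInf fun D => two_le_psiD_of_adj D h

end PsiD

section ShiftGraph

variable {m : ℕ}

instance : DecidableRel (shiftGraph m).Adj :=
  fun x y => inferInstanceAs (Decidable (x.1.2 = y.1.1 ∨ x.1.1 = y.1.2))

theorem shiftGraph_adj_fst_ne {x y : {p : Fin m × Fin m // p.1 ≠ p.2}}
    (h : (shiftGraph m).Adj x y) : x.1.1 ≠ y.1.1 := by
  intro e
  rcases h with h | h
  · exact x.2 (e.trans h.symm)
  · exact y.2 (e.symm.trans h)

/-- The second clause breaks the tie when `q` is `p` reversed. -/
def ShiftArc (p q : Fin m × Fin m) : Prop :=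
  p.2 = q.1 ∧ (p.1 = q.2 → p.1 < p.2)

theorem shiftArc_or_shiftArc_of_snd_eq {p q : Fin m × Fin m} (hp : p.1 ≠ p.2)
    (e : p.2 = q.1) : ShiftArc p q ∨ ShiftArc q p := by
  by_cases e' : p.1 = q.2
  · rcases lt_or_gt_of_ne hp with hlt | hgt
    · exact Or.inl ⟨e, fun _ => hlt⟩
    · exact Or.inr ⟨e'.symm, fun _ => by rwa [← e, ← e']⟩
  · exact Or.inl ⟨e, fun h => absurd h e'⟩

theorem shiftArc_or_shiftArc {x y : {p : Fin m × Fin m // p.1 ≠ p.2}}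
    (h : (shiftGraph m).Adj x y) : ShiftArc x.1 y.1 ∨ ShiftArc y.1 x.1 :=
  h.elim (shiftArc_or_shiftArc_of_snd_eq x.2) fun e =>
    (shiftArc_or_shiftArc_of_snd_eq y.2 e.symm).symm

theorem ShiftArc.not_shiftArc {p q : Fin m × Fin m} (h : ShiftArc p q) :
    ¬ ShiftArc q p := by
  rintro ⟨e', he'⟩
  exact lt_asymm (h.2 e'.symm) (by rw [h.1, ← e']; exact he' h.1.symm)

variable {V : Type u} {G : SimpleGraph V}

def shiftOrientation (f : G →g shiftGraph m) : GraphOrientation G where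
  dir u v := G.Adj u v ∧ ShiftArc (f u).1 (f v).1
  adj_iff u v := by
    refine ⟨fun h => ?_, by rintro (⟨h, -⟩ | ⟨h, -⟩) <;> [exact h; exact h.symm]⟩
    exact (shiftArc_or_shiftArc (f.map_rel h)).imp (⟨h, ·⟩) (⟨h.symm, ·⟩)
  asymm _ _ h h' := h.2.not_shiftArc h'.2

theorem psiD_shiftOrientation_le_two (f : G →g shiftGraph m) :
    psiD (shiftOrientation f) ≤ 2 := by
  refine sInf_le ⟨fun v => (f v).1.1,
    fun u w h => Fin.val_injective.ne (shiftGraph_adj_fst_ne (f.map_rel h)), fun v => ?_⟩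
  have hsub : (fun w => ((f w).1.1 : ℕ)) '' (shiftOrientation f).closedOutNbhd v ⊆
      {((f v).1.1 : ℕ), ((f v).1.2 : ℕ)} := by
    rintro _ ⟨w, rfl | ⟨-, e, -⟩, rfl⟩
    · exact Or.inl rfl
    · exact Or.inr (congrArg Fin.val e.symm)
  calc _ ≤ _ := Set.encard_mono hsub
    _ ≤ _ := Set.encard_insert_le _ _
    _ = 2 := by rw [Set.encard_singleton]; rfl

theorem psiDMin_le_two_of_hom (f : G →g shiftGraph m) : psiDMin G ≤ 2 :=
  (iInf_le _ (shiftOrientation f)).trans (psiD_shiftOrientation_le_two f)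

end ShiftGraph

section Mycielskian

variable {V W : Type u} {G : SimpleGraph V} {H : SimpleGraph W}

theorem genMycielskian_adj_bottom {r : ℕ} (hr : 0 < r) {u v : V} (h : G.Adj u v) :
    (genMycielskian G r).Adj (some (u, ⟨0, hr⟩)) (some (v, ⟨0, hr⟩)) :=
  ⟨h, Or.inr (Or.inr ⟨rfl, rfl⟩)⟩

def genMycielskian.map (f : G →g H) (r : ℕ) : genMycielskian G r →g genMycielskian H r where
  toFun := Option.map (Prod.map f id)
  map_rel' := by
    rintro (_ | ⟨u, i⟩) (_ | ⟨v, j⟩) h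
    exacts [h, h, h, ⟨f.map_rel h.1, h.2⟩]

end Mycielskian

section CycleFive

open SimpleGraph

def cycleFiveLabel (u : Fin 2) (top : Bool) : Fin 5 :=
  (if u = 0 then 1 else -1) * (if top then 1 else -2)

theorem cycleFiveLabel_adj :
    ∀ (u v : Fin 2) (a b : Bool), u ≠ v → ¬ (a ∧ b) →
      (cycleGraph 5).Adj (cycleFiveLabel u a) (cycleFiveLabel v b) := by
  decide

theorem cycleFive_adj_zero_cycleFiveLabel :
    ∀ u : Fin 2, (cycleGraph 5).Adj 0 (cycleFiveLabel u true) := by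
  decide

/-- `M_r(K₂)` is the cycle `C_{2r+1}`; walking down from the apex, one side is sent to
`1, 2, 1, 2, …`, the other to `-1, -2, -1, -2, …`, and the bottom edge joins `2` and `-2`. -/
def genMycielskianTopTwoToCycleFive {r : ℕ} (hr : 2 ≤ r) :
    genMycielskian (⊤ : SimpleGraph (Fin 2)) r →g cycleGraph 5 where
  toFun
    | none => 0
    | some (u, i) => cycleFiveLabel u (decide (i.val ≠ 0 ∧ i.val % 2 = (r - 1) % 2))
  map_rel' := by
    rintro (_ | ⟨u, i⟩) (_ | ⟨v, j⟩) h
    · exact h.elim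
    · have hj : j.val = r - 1 := h
      convert cycleFive_adj_zero_cycleFiveLabel v
      simp only [decide_eq_true_eq]
      omega
    · have hi : i.val = r - 1 := h
      refine Adj.symm ?_
      convert cycleFive_adj_zero_cycleFiveLabel u
      simp only [decide_eq_true_eq]
      omega
    · obtain ⟨huv, hij⟩ := h
      refine cycleFiveLabel_adj u v _ _ huv ?_
      simp only [Bool.decide_and, Bool.and_eq_true, decide_eq_true_eq]
      omega

end CycleFive

section ShiftTable

open SimpleGraph

def capLevel (r : ℕ) (i : Fin r) : Fin 4 :=
  ⟨min (r - 1 - i.val) 3, by omega⟩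

/-- The loops at `1, 2, 3` account for the edges inside the bottom level and for the collapse
of all levels at distance at least `3` from the top. -/
def CapLevelAdj (a b : Fin 4) : Prop :=
  a.val + 1 = b.val ∨ b.val + 1 = a.val ∨ (a = b ∧ a ≠ 0)

instance : DecidableRel CapLevelAdj :=
  fun _ _ => inferInstanceAs (Decidable (_ ∨ _ ∨ _))

theorem capLevelAdj_capLevel {r : ℕ} (hr : 2 ≤ r) {i j : Fin r}
    (h : i.val + 1 = j.val ∨ j.val + 1 = i.val ∨ (i.val = 0 ∧ j.val = 0)) :
    CapLevelAdj (capLevel r i) (capLevel r j) := by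
  simp only [CapLevelAdj, capLevel, ne_eq, Fin.ext_iff, Fin.val_zero]
  omega

def shiftTable : Fin 4 → Fin 5 → Fin 4 × Fin 4 :=
  ![![(1, 0), (1, 2), (3, 0), (1, 0), (1, 2)],
    ![(2, 0), (0, 3), (3, 1), (2, 3), (0, 2)],
    ![(1, 0), (0, 3), (3, 1), (1, 0), (0, 2)],
    ![(1, 0), (0, 3), (3, 1), (1, 0), (0, 1)]]

theorem shiftTable_ne : ∀ a x, (shiftTable a x).1 ≠ (shiftTable a x).2 := by
  decide

theorem capLevel_eq_zero {r : ℕ} {i : Fin r} (h : i.val = r - 1) : capLevel r i = 0 := by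
  simp only [capLevel, Fin.ext_iff, Fin.val_zero]
  omega

def shiftTableVertex (a : Fin 4) (x : Fin 5) : {p : Fin 4 × Fin 4 // p.1 ≠ p.2} :=
  ⟨shiftTable a x, shiftTable_ne a x⟩

theorem shiftGraph_adj_shiftTableVertex :
    ∀ a b x y, CapLevelAdj a b → (cycleGraph 5).Adj x y →
      (shiftGraph 4).Adj (shiftTableVertex a x) (shiftTableVertex b y) := by
  decide

theorem shiftGraph_adj_apex_shiftTableVertex :
    ∀ x, (shiftGraph 4).Adj ⟨(0, 1), by decide⟩ (shiftTableVertex 0 x) := by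
  decide

def genMycielskianCycleFiveToShift {r : ℕ} (hr : 2 ≤ r) :
    genMycielskian (cycleGraph 5) r →g shiftGraph 4 where
  toFun
    | none => ⟨(0, 1), by decide⟩
    | some (x, i) => shiftTableVertex (capLevel r i) x
  map_rel' := by
    rintro (_ | ⟨x, i⟩) (_ | ⟨y, j⟩) h
    · exact h.elim
    · simpa only [capLevel_eq_zero h] using shiftGraph_adj_apex_shiftTableVertex y
    · simpa only [capLevel_eq_zero h] using (shiftGraph_adj_apex_shiftTableVertex x).symm
    · exact shiftGraph_adj_shiftTableVertex _ _ x y (capLevelAdj_capLevel hr h.2) h.1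

end ShiftTable

theorem statement8 (r₁ r₂ : ℕ) (h₁ : 2 ≤ r₁) (h₂ : 2 ≤ r₂) :
    Nonempty
        (genMycielskian (genMycielskian (⊤ : SimpleGraph (Fin 2)) r₁) r₂ →g shiftGraph 4) ∧
      psiDMin (genMycielskian (genMycielskian (⊤ : SimpleGraph (Fin 2)) r₁) r₂) = 2 := by
  let f := (genMycielskianCycleFiveToShift h₂).comp
    (genMycielskian.map (genMycielskianTopTwoToCycleFive h₁) r₂)
  have hK₂ : (⊤ : SimpleGraph (Fin 2)).Adj 0 1 := by simp
  have hadj := genMycielskian_adj_bottom (by omega : 0 < r₂)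
    (genMycielskian_adj_bottom (by omega : 0 < r₁) hK₂)
  exact ⟨⟨f⟩, le_antisymm (psiDMin_le_two_of_hom f) (two_le_psiDMin_of_adj hadj)⟩
end

section
/- For all positive integers r and m, there is no graph homomorphism from the wheel W_{2r+1} = M₁(M_r(K₂)) (the graph consisting of a cycle C_{2r+1} together with one additional vertex adjacent to all cycle vertices) to the symmetric shift graph S_m; equivalently, every orientation of W_{2r+1} contains an alternating odd cycle. -/
universe u

/-!
A homomorphism `M₁(H) → S_m` sending the apex to `(a, b)` 2-colours `H` by whether the image
of a vertex starts with `b`, which alternates along edges because the neighbourhood of every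
vertex of `S_m` is bipartite. Likewise, an orientation of `M₁(H)` with no alternating triangle
makes every triangle through the apex a directed cycle, so the direction of the spokes
alternates along edges of `H`. Either way `H` is 2-colourable, but `M_r(K₂)` is not: it is an
odd cycle.
-/

namespace SimpleGraph

variable {V : Type u} {G : SimpleGraph V}

lemma colorable_two_of_adj_iff_not {P : V → Prop} (hP : ∀ x y, G.Adj x y → (P y ↔ ¬ P x)) :
    G.Colorable 2 :=
  Fintype.card_prop ▸ (Coloring.mk P fun h hxy => by simpa [hxy] using hP _ _ h).colorable

lemma genMycielskian_one_adj_apex (x : V) : (genMycielskian G 1).Adj (some (x, 0)) none := rfl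

lemma genMycielskian_one_adj_of_adj {x y : V} (h : G.Adj x y) :
    (genMycielskian G 1).Adj (some (x, 0)) (some (y, 0)) :=
  ⟨h, Or.inr (Or.inr ⟨rfl, rfl⟩)⟩

lemma not_colorable_two_genMycielskian {r : ℕ} (hr : 1 ≤ r) {u v : V} (huv : G.Adj u v) :
    ¬ (genMycielskian G r).Colorable 2 := by
  rintro ⟨c⟩
  -- `(u, i)` and `(v, i)` get different colours on every level, so the apex would need a third.
  have fin_two : ∀ a b d : Fin 2, a ≠ b → b ≠ d → a = d := by decide
  have level : ∀ (i : ℕ) (hi : i < r), c (some (u, ⟨i, hi⟩)) ≠ c (some (v, ⟨i, hi⟩)) := by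
    intro i hi
    induction i with
    | zero => exact c.valid ⟨huv, Or.inr (Or.inr ⟨rfl, rfl⟩)⟩
    | succ i ih =>
      have hu := c.valid (show (genMycielskian G r).Adj (some (u, ⟨i + 1, hi⟩))
        (some (v, ⟨i, by omega⟩)) from ⟨huv, Or.inr (Or.inl rfl)⟩)
      have hv := c.valid (show (genMycielskian G r).Adj (some (v, ⟨i + 1, hi⟩))
        (some (u, ⟨i, by omega⟩)) from ⟨huv.symm, Or.inr (Or.inl rfl)⟩)
      rw [fin_two _ _ _ hu (ih (by omega)).symm, fin_two _ _ _ hv (ih (by omega))]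
      exact ih (by omega)
  have top := level (r - 1) (by omega)
  have hu := c.valid (show (genMycielskian G r).Adj none (some (u, ⟨r - 1, by omega⟩)) from rfl)
  have hv := c.valid (show (genMycielskian G r).Adj none (some (v, ⟨r - 1, by omega⟩)) from rfl)
  exact top (fin_two _ _ _ hu.symm hv)

end SimpleGraph

lemma shiftGraph_fst_eq_iff_of_adj {m : ℕ} {w p q : {p : Fin m × Fin m // p.1 ≠ p.2}}
    (hp : (shiftGraph m).Adj p w) (hq : (shiftGraph m).Adj q w) (hpq : (shiftGraph m).Adj p q) :
    q.1.1 = w.1.2 ↔ ¬ p.1.1 = w.1.2 := by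
  obtain ⟨⟨p1, p2⟩, hp12⟩ := p
  obtain ⟨⟨q1, q2⟩, hq12⟩ := q
  obtain ⟨⟨a, b⟩, hab⟩ := w
  simp only [shiftGraph] at hp hq hpq hp12 hq12 hab ⊢
  grind

lemma colorable_two_of_hom_genMycielskian_one_shiftGraph {V : Type u} {G : SimpleGraph V} {m : ℕ}
    (φ : genMycielskian G 1 →g shiftGraph m) : G.Colorable 2 :=
  SimpleGraph.colorable_two_of_adj_iff_not (P := fun x => (φ (some (x, 0))).1.1 = (φ none).1.2)
    fun _ _ h => shiftGraph_fst_eq_iff_of_adj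
      (φ.map_adj (SimpleGraph.genMycielskian_one_adj_apex _))
      (φ.map_adj (SimpleGraph.genMycielskian_one_adj_apex _))
      (φ.map_adj (SimpleGraph.genMycielskian_one_adj_of_adj h))

namespace GraphOrientation

variable {V : Type u} {G : SimpleGraph V} (D : GraphOrientation G)

lemma adj_of_dir {x y : V} (h : D.dir x y) : G.Adj x y := (D.adj_iff x y).2 (Or.inl h)

lemma hasAltOddCycle_of_transitive {x y z : V} (hxy : D.dir x y) (hyz : D.dir y z)
    (hxz : D.dir x z) : HasAltOddCycle D := by
  have nxy := (D.adj_of_dir hxy).ne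
  have nyz := (D.adj_of_dir hyz).ne
  have nxz := (D.adj_of_dir hxz).ne
  have zmod_three : ∀ i : ZMod 3, i = 0 ∨ i = 1 ∨ i = 2 := by decide
  refine ⟨3, (![x, y, z] : ZMod 3 → V), ⟨1, rfl⟩, ⟨?_, ?_⟩, ⟨1, ?_, ?_⟩⟩
  · intro i j h
    fin_cases i <;> fin_cases j <;> first | rfl | simp_all [eq_comm]
  · intro i
    rcases zmod_three i with rfl | rfl | rfl
    · exact D.adj_of_dir hxy
    · exact D.adj_of_dir hyz
    · exact (D.adj_of_dir hxz).symm
  · rintro (⟨hyx, -⟩ | ⟨-, hzy⟩)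
    · exact D.asymm _ _ hxy hyx
    · exact D.asymm _ _ hyz hzy
  · intro j hj
    rcases zmod_three j with rfl | rfl | rfl
    · exact absurd (Or.inl ⟨hxz, hxy⟩) hj
    · rfl
    · exact absurd (Or.inr ⟨hyz, hxz⟩) hj

end GraphOrientation

lemma colorable_two_of_not_hasAltOddCycle {V : Type u} {G : SimpleGraph V}
    (D : GraphOrientation (genMycielskian G 1)) (hD : ¬ HasAltOddCycle D) : G.Colorable 2 := by
  refine SimpleGraph.colorable_two_of_adj_iff_not (P := fun x => D.dir (some (x, 0)) none)
    fun x y hxy => ⟨fun hy hx => ?_, fun hx => ?_⟩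
  · rcases (D.adj_iff _ _).1 (SimpleGraph.genMycielskian_one_adj_of_adj hxy) with h | h
    · exact hD (D.hasAltOddCycle_of_transitive h hy hx)
    · exact hD (D.hasAltOddCycle_of_transitive h hx hy)
  · have hzx := ((D.adj_iff _ _).1 (SimpleGraph.genMycielskian_one_adj_apex x)).resolve_left hx
    by_contra hy
    have hzy := ((D.adj_iff _ _).1 (SimpleGraph.genMycielskian_one_adj_apex y)).resolve_left hy
    rcases (D.adj_iff _ _).1 (SimpleGraph.genMycielskian_one_adj_of_adj hxy) with h | h
    · exact hD (D.hasAltOddCycle_of_transitive hzx h hzy)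
    · exact hD (D.hasAltOddCycle_of_transitive hzy h hzx)

theorem statement9_general (r m : ℕ) (hr : 1 ≤ r) :
    IsEmpty (genMycielskian (genMycielskian (⊤ : SimpleGraph (Fin 2)) r) 1 →g shiftGraph m) ∧
      ∀ D : GraphOrientation (genMycielskian (genMycielskian (⊤ : SimpleGraph (Fin 2)) r) 1),
        HasAltOddCycle D := by
  have not_colorable := SimpleGraph.not_colorable_two_genMycielskian hr
    (show (⊤ : SimpleGraph (Fin 2)).Adj 0 1 by decide)
  exact ⟨⟨fun φ => not_colorable (colorable_two_of_hom_genMycielskian_one_shiftGraph φ)⟩,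
    fun D => by_contra fun hD => not_colorable (colorable_two_of_not_hasAltOddCycle D hD)⟩

theorem statement9 (r m : ℕ) (hr : 1 ≤ r) (hm : 1 ≤ m) :
    IsEmpty (genMycielskian (genMycielskian (⊤ : SimpleGraph (Fin 2)) r) 1 →g shiftGraph m) ∧
      ∀ D : GraphOrientation (genMycielskian (genMycielskian (⊤ : SimpleGraph (Fin 2)) r) 1),
        HasAltOddCycle D :=
  statement9_general r m hr
end

section
/- For any graph G and integers r' ≥ r ≥ 1, there exists a graph homomorphism from M_{r'}(G) to M_r(G); explicitly, the map sending the apex vertex z of M_{r'}(G) to the apex vertex z of M_r(G) and sending (v,i) to (v, max{i−(r'−r), 0}) is such a homomorphism. -/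
universe u

/-- Lowering every level by `k` (truncated at `0`) keeps consecutive levels consecutive, except
that the levels below `k` all collapse onto level `0`, whose copies of `G` are adjacent too. -/
lemma levelAdj_tsub {i j : ℕ} (k : ℕ) (hij : i + 1 = j ∨ j + 1 = i ∨ i = 0 ∧ j = 0) :
    i - k + 1 = j - k ∨ j - k + 1 = i - k ∨ i - k = 0 ∧ j - k = 0 := by
  omega

lemma tsub_tsub_lt {i r r' : ℕ} (hi : i < r') (hr : 1 ≤ r) : i - (r' - r) < r := by
  omega

def genMycielskianLower {V : Type u} (G : SimpleGraph V) {r r' : ℕ} (hr : 1 ≤ r) (h : r ≤ r') :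
    genMycielskian G r' →g genMycielskian G r where
  toFun
    | none => none
    | some (v, i) => some (v, ⟨i.val - (r' - r), tsub_tsub_lt i.isLt hr⟩)
  map_rel' := by
    rintro (_ | ⟨u, i⟩) (_ | ⟨v, j⟩) hadj
    · exact hadj
    · change (j : ℕ) - (r' - r) = r - 1
      change (j : ℕ) = r' - 1 at hadj
      omega
    · change (i : ℕ) - (r' - r) = r - 1
      change (i : ℕ) = r' - 1 at hadj
      omega
    · exact ⟨hadj.1, levelAdj_tsub (r' - r) hadj.2⟩

theorem statement12 {V : Type u} (G : SimpleGraph V) (r r' : ℕ) (hr : 1 ≤ r) (h : r ≤ r') :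
    ∃ φ : genMycielskian G r' →g genMycielskian G r,
      φ none = none ∧
      ∀ (v : V) (i : Fin r'),
        φ (some (v, i)) = some (v, ⟨i.val - (r' - r), by have := i.isLt; omega⟩) :=
  ⟨genMycielskianLower G hr h, rfl, fun _ _ => rfl⟩
end

section
/- Let G be a graph containing an odd cycle, with odd girth g. If G contains a bipartite subgraph B such that every cycle of length g in G uses at most one edge not belonging to B, then G admits an orientation in which every cycle of length g (i.e., every shortest odd cycle) is alternating. -/
universe u

/-!
Colour the bipartite graph `B` with `0` and `1`, and orient every edge of `G` between the colour
classes from `0` to `1`, every other edge arbitrarily (here: along a fixed linear order of the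
vertices). A shortest odd cycle needs an edge whose ends have the same colour; such an edge is not
in `B`, so there is exactly one of them. Every vertex away from it lies on two edges joining the
colour classes, hence is a source (colour `0`) or a sink (colour `1`). At the ends `j`, `j + 1` of
the monochromatic edge, the outer edges point in opposite ways along the cycle, so exactly one of
`j`, `j + 1` fails to be a source or a sink.
-/

open Function

theorem ZMod.exists_add_one_eq_of_odd {n : ℕ} (hn : Odd n) (κ : ZMod n → ZMod 2) :
    ∃ i, κ (i + 1) = κ i := by
  have : NeZero n := ⟨hn.pos.ne'⟩
  by_contra! h
  have hstep : ∀ i, κ (i + 1) - κ i = 1 := fun i =>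
    (by decide : ∀ a b : ZMod 2, a ≠ b → a - b = 1) _ _ (h i)
  -- telescoping `κ (i + 1) - κ i` around the cycle gives `0`, but each term is `1`
  have : (1 : ZMod 2) = 0 :=
    calc (1 : ZMod 2) = n := (ZMod.natCast_eq_one_iff_odd.mpr hn).symm
      _ = ∑ i : ZMod n, (κ (i + 1) - κ i) := by simp [hstep, ZMod.card]
      _ = 0 := by
        rw [Finset.sum_sub_distrib, sub_eq_zero]
        exact Equiv.sum_comp (Equiv.addRight 1) κ
  exact one_ne_zero this

theorem existsUnique_of_xor {α : Type*} {P : α → Prop} {a b : α}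
    (hP : ∀ i, P i → i = a ∨ i = b) (hab : Xor (P a) (P b)) : ∃! i, P i := by
  rcases hab with ⟨ha, hb⟩ | ⟨hb, ha⟩
  · exact ⟨a, ha, fun i hi => (hP i hi).resolve_right fun h => hb (h ▸ hi)⟩
  · exact ⟨b, hb, fun i hi => (hP i hi).resolve_left fun h => ha (h ▸ hi)⟩

namespace GraphOrientation

variable {V : Type u} {G : SimpleGraph V}

def ofKey (G : SimpleGraph V) {α : Type*} [LinearOrder α] (key : V → α)
    (hkey : Injective key) : GraphOrientation G where
  dir u v := G.Adj u v ∧ key u < key v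
  adj_iff u v := by
    refine ⟨fun h => ?_, fun h => h.elim And.left fun h => h.1.symm⟩
    rcases lt_or_gt_of_ne (hkey.ne h.ne) with hlt | hlt
    exacts [Or.inl ⟨h, hlt⟩, Or.inr ⟨h.symm, hlt⟩]
  asymm _ _ h h' := lt_asymm h.2 h'.2

def ofColouring [LinearOrder V] (G : SimpleGraph V) {β : Type*} [LinearOrder β] (κ : V → β) :
    GraphOrientation G :=
  ofKey G (fun v => toLex (κ v, v)) fun _ _ h => (Prod.ext_iff.mp (toLex.injective h)).2

theorem dir_swap_iff (D : GraphOrientation G) {u v : V} (h : G.Adj u v) :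
    D.dir v u ↔ ¬ D.dir u v :=
  ⟨D.asymm v u, fun h' => ((D.adj_iff u v).mp h).resolve_left h'⟩

/-- A vertex of a cycle is neither a source nor a sink iff its two edges point the same way
along the cycle. -/
theorem isAltCycle_iff (D : GraphOrientation G) {n : ℕ} {f : ZMod n → V}
    (hf : ∀ i, G.Adj (f i) (f (i + 1))) :
    IsAltCycle D.dir f ↔ ∃! i, (D.dir (f (i - 1)) (f i) ↔ D.dir (f i) (f (i + 1))) := by
  refine existsUnique_congr fun i => ?_
  have hprev : G.Adj (f (i - 1)) (f i) := by simpa using hf (i - 1)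
  rw [D.dir_swap_iff hprev, D.dir_swap_iff (hf i)]
  tauto

end GraphOrientation

/-- `s i` says which way edge `i` of a cycle is oriented and `p i` which colour vertex `i` has. If
all edges but edge `j` join different colours and are oriented by the colour of their first end,
then exactly one vertex of the cycle lies on two edges pointing the same way. -/
theorem existsUnique_eq_consecutive_of_colour_changes {n : ℕ} (h1 : (1 : ZMod n) ≠ 0)
    {p s : ZMod n → Prop} {j : ZMod n} (hp : ∀ i ≠ j, (p (i + 1) ↔ ¬ p i))
    (hs : ∀ i ≠ j, (s i ↔ p i)) (hj : p (j + 1) ↔ p j) : ∃! i, (s (i - 1) ↔ s i) := by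
  have hsucc : j + 1 ≠ j := by simpa using h1
  have hpred : j - 1 ≠ j := by simpa using h1
  refine existsUnique_of_xor (a := j) (b := j + 1) (fun i hi => ?_) ?_
  · by_contra! hij
    have hi1 : i - 1 ≠ j := fun h => hij.2 (by rw [← h, sub_add_cancel])
    have := hp (i - 1) hi1
    rw [sub_add_cancel] at this
    rw [hs _ hi1, hs _ hij.1] at hi
    tauto
  · have := hp (j - 1) hpred
    rw [sub_add_cancel] at this
    rw [add_sub_cancel_right, hs _ hpred, hs _ hsucc]
    tauto

theorem isAltCycle_of_unique_monochromatic_edge {V : Type u} [LinearOrder V]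
    {G : SimpleGraph V} (κ : V → Fin 2) {n : ℕ} {f : ZMod n → V}
    (hf : ∀ i, G.Adj (f i) (f (i + 1))) {j : ZMod n}
    (hmono : ∀ i, κ (f (i + 1)) = κ (f i) → i = j) (hj : κ (f (j + 1)) = κ (f j)) :
    IsAltCycle (GraphOrientation.ofColouring G κ).dir f := by
  have h1 : (1 : ZMod n) ≠ 0 := fun h => (hf 0).ne (by rw [zero_add, h])
  rw [GraphOrientation.isAltCycle_iff _ hf]
  have := existsUnique_eq_consecutive_of_colour_changes h1 (p := fun i => κ (f i) = 0)
    (s := fun i => (GraphOrientation.ofColouring G κ).dir (f i) (f (i + 1)))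
    (fun i hi => ?_) (fun i hi => ?_) (by rw [hj])
  · simpa only [sub_add_cancel] using this
  · exact (by decide : ∀ a b : Fin 2, a ≠ b → (a = 0 ↔ ¬ b = 0)) _ _ (mt (hmono i) hi)
  · have hne : κ (f i) ≠ κ (f (i + 1)) := fun h => hi (hmono i h.symm)
    simp only [GraphOrientation.ofColouring, GraphOrientation.ofKey, hf i, true_and,
      Prod.Lex.toLex_lt_toLex, hne, false_and, or_false]
    exact (by decide : ∀ a b : Fin 2, a ≠ b → (a < b ↔ a = 0)) _ _ hne

theorem statement16_general {V : Type u} (G : SimpleGraph V)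
    (hodd : ∃ n, Odd n ∧ ∃ f : ZMod n → V, G.IsCycleMap f)
    (B : SimpleGraph V) (hB : B.Colorable 2)
    (hone : ∀ f : ZMod (oddGirth G) → V, G.IsCycleMap f →
      {i : ZMod (oddGirth G) | ¬ B.Adj (f i) (f (i + 1))}.Subsingleton) :
    ∃ D : GraphOrientation G,
      ∀ f : ZMod (oddGirth G) → V, G.IsCycleMap f → IsAltCycle D.dir f := by
  obtain ⟨c⟩ := hB
  let : LinearOrder V := IsWellOrder.linearOrder WellOrderingRel
  refine ⟨GraphOrientation.ofColouring G c, fun f hf => ?_⟩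
  obtain ⟨j, hj⟩ := ZMod.exists_add_one_eq_of_odd (Nat.sInf_mem hodd).1 fun i => c (f i)
  have hnotB : ∀ i, c (f (i + 1)) = c (f i) → ¬ B.Adj (f i) (f (i + 1)) :=
    fun i h hadj => c.valid hadj h.symm
  exact isAltCycle_of_unique_monochromatic_edge c hf.2
    (fun i hi => hone f hf (hnotB i hi) (hnotB j hj)) hj

theorem statement16 {V : Type u} (G : SimpleGraph V)
    (hodd : ∃ n, Odd n ∧ ∃ f : ZMod n → V, G.IsCycleMap f)
    (B : SimpleGraph V) (hBG : B ≤ G) (hB : B.Colorable 2)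
    (hone : ∀ f : ZMod (oddGirth G) → V, G.IsCycleMap f →
      {i : ZMod (oddGirth G) | ¬ B.Adj (f i) (f (i + 1))}.Subsingleton) :
    ∃ D : GraphOrientation G,
      ∀ f : ZMod (oddGirth G) → V, G.IsCycleMap f → IsAltCycle D.dir f :=
  statement16_general G hodd B hB hone
end

section
/- For all positive integers m and k, the Kneser graph KG(m(2k+1), mk) admits an orientation in which every cycle of length 2k+1 is alternating; since the odd girth of KG(m(2k+1), mk) equals 2k+1, this orientation makes all shortest odd cycles alternating. -/
universe u

/-!
A point `x` of `[m(2k+1)]` never lies in two consecutive sets of a closed walk in the Kneser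
graph, so on an odd closed walk of length `n` it lies in at most `(n - 1)/2` of the sets.
Double counting the incidences gives `n ≥ 2k + 1`, and for `n = 2k + 1` it forces every point
into exactly `k` of the sets. Blowing up the cycle `j ↦ j + {1, 3, …, 2k - 1}` of `KG(2k+1, k)`
shows that `2k + 1` is attained.

For the orientation fix a point `x` and direct every edge away from the set containing `x`. On a
`(2k+1)`-cycle the `k` sets containing `x` are pairwise non-consecutive, so exactly one pair of
consecutive sets avoids `x`. Every other set is a source (it contains `x`) or a sink (both of its
neighbours contain `x`), and of the exceptional pair exactly one vertex is a sink, whichever way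
the edge between them points.
-/
open Finset

section CyclicallyStable

variable {n : ℕ}

def IsCyclicallyStable (S : Finset (ZMod n)) : Prop :=
  ∀ i ∈ S, i + 1 ∉ S

theorem ZMod.eq_of_add_natCast_eq_add_natCast {j : ZMod n} {a b : ℕ} (ha : a < n) (hb : b < n)
    (h : j + a = j + b) : a = b := by
  have h' := congrArg ZMod.val (add_left_cancel h)
  rwa [ZMod.val_cast_of_lt ha, ZMod.val_cast_of_lt hb] at h'

namespace IsCyclicallyStable

variable {S : Finset (ZMod n)}

theorem card_union_image_add_one (hS : IsCyclicallyStable S) :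
    #(S ∪ S.image (· + 1)) = 2 * #S := by
  rw [card_union_of_disjoint, card_image_of_injective _ (add_left_injective 1), two_mul]
  refine disjoint_right.mpr fun _ h => ?_
  obtain ⟨i, hi, rfl⟩ := mem_image.mp h
  exact hS i hi

variable [NeZero n]

theorem two_mul_card_le (hS : IsCyclicallyStable S) : 2 * #S ≤ n := by
  rw [← hS.card_union_image_add_one]
  exact (card_le_univ _).trans_eq (ZMod.card n)

theorem existsUnique_gap (hS : IsCyclicallyStable S) (hcard : 2 * #S + 1 = n) :
    ∃! j, j ∉ S ∧ j + 1 ∉ S := by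
  obtain ⟨g, hg⟩ : ∃ g, (S ∪ S.image (· + 1))ᶜ = {g} := by
    apply card_eq_one.mp
    rw [card_compl, hS.card_union_image_add_one, ZMod.card]
    omega
  have key : ∀ j, j ∉ S ∧ j + 1 ∉ S ↔ j + 1 = g := by
    intro j
    rw [← mem_singleton, ← hg]
    simp [and_comm]
  exact ⟨g - 1, (key _).mpr (sub_add_cancel g 1), fun j hj => eq_sub_of_add_eq ((key j).mp hj)⟩

end IsCyclicallyStable

end CyclicallyStable

section Orientation

variable {V : Type*} (G : SimpleGraph V) (p : V → Prop)

def orientationOutOf : GraphOrientation G where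
  dir u v := G.Adj u v ∧ (p u ∧ ¬ p v ∨ (p u ↔ p v) ∧ WellOrderingRel u v)
  adj_iff u v := by
    refine ⟨fun h => ?_, ?_⟩
    · rcases trichotomous_of WellOrderingRel u v with huv | rfl | hvu
      · by_cases p u <;> by_cases p v <;> tauto
      · exact absurd h (G.loopless.irrefl u)
      · have := h.symm
        by_cases p u <;> by_cases p v <;> tauto
    · rintro (⟨h, -⟩ | ⟨h, -⟩)
      exacts [h, h.symm]
  asymm u v := by
    rintro ⟨-, h⟩ ⟨-, h'⟩
    have := asymm_of WellOrderingRel (a := u) (b := v)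
    tauto

variable {G p}

theorem orientationOutOf_dir {u v : V} (h : G.Adj u v) (hu : p u) (hv : ¬ p v) :
    (orientationOutOf G p).dir u v :=
  ⟨h, .inl ⟨hu, hv⟩⟩

end Orientation

theorem isAltCycle_of_existsUnique_gap {V : Type*} {G : SimpleGraph V} (O : GraphOrientation G)
    {n : ℕ} [Fact (1 < n)] {f : ZMod n → V} (hf : ∀ i, G.Adj (f i) (f (i + 1)))
    {S : Set (ZMod n)} (hS : ∀ i ∈ S, O.dir (f i) (f (i - 1)) ∧ O.dir (f i) (f (i + 1)))
    (hgap : ∃! j, j ∉ S ∧ j + 1 ∉ S) : IsAltCycle O.dir f := by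
  obtain ⟨j, ⟨hj, hj₁⟩, hgap⟩ := hgap
  have hj_pred : j - 1 ∈ S := by
    by_contra h
    simpa using hgap (j - 1) ⟨h, by simpa using hj⟩
  have hj_succ : j + 1 + 1 ∈ S := by
    by_contra h
    simpa using hgap (j + 1) ⟨hj₁, h⟩
  have hsink : ∀ i, i - 1 ∈ S → i + 1 ∈ S → O.dir (f (i - 1)) (f i) ∧ O.dir (f (i + 1)) (f i) :=
    fun i h₁ h₂ => ⟨by simpa using (hS _ h₁).2, by simpa using (hS _ h₂).1⟩
  set Q : ZMod n → Prop := fun i => (O.dir (f i) (f (i - 1)) ∧ O.dir (f i) (f (i + 1))) ∨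
    (O.dir (f (i - 1)) (f i) ∧ O.dir (f (i + 1)) (f i))
  have hQ_of_ne : ∀ i, i ≠ j → i ≠ j + 1 → Q i := by
    intro i hij hij₁
    by_cases hi : i ∈ S
    · exact .inl (hS i hi)
    refine .inr (hsink i (by_contra fun h => hij₁ ?_) (by_contra fun h => hij (hgap i ⟨hi, h⟩)))
    rw [← hgap (i - 1) ⟨h, by simpa using hi⟩, sub_add_cancel]
  -- The direction of the edge between `j` and `j + 1` decides which of them is exceptional.
  rcases (O.adj_iff _ _).mp (hf j) with h | h
  · have hQj₁ : Q (j + 1) := .inr ⟨by simpa using h, by simpa using (hS _ hj_succ).1⟩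
    refine ⟨j, ?_, fun i hi => by_contra fun hij => hi ?_⟩
    · rintro (⟨h', -⟩ | ⟨-, h'⟩)
      · exact O.asymm _ _ (by simpa using (hS _ hj_pred).2) h'
      · exact O.asymm _ _ h h'
    by_cases hij₁ : i = j + 1
    · exact hij₁ ▸ hQj₁
    · exact hQ_of_ne i hij hij₁
  · have hQj : Q j := .inr ⟨by simpa using (hS _ hj_pred).2, h⟩
    refine ⟨j + 1, ?_, fun i hi => by_contra fun hij => hi ?_⟩
    · rintro (⟨-, h'⟩ | ⟨h', -⟩)
      · exact O.asymm _ _ (by simpa using (hS _ hj_succ).1) h'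
      · exact O.asymm _ _ h (by simpa using h')
    by_cases hij₀ : i = j
    · exact hij₀ ▸ hQj
    · exact hQ_of_ne i hij₀ hij

section Occurrences

variable {N r n : ℕ} [NeZero n] (f : ZMod n → {A : Finset (Fin N) // A.card = r})

def occurrences (x : Fin N) : Finset (ZMod n) :=
  {i | x ∈ (f i).1}

theorem sum_card_occurrences : ∑ x, #(occurrences f x) = n * r := by
  have := sum_card_bipartiteAbove_eq_sum_card_bipartiteBelow (s := univ) (t := univ)
    (fun (x : Fin N) (i : ZMod n) => x ∈ (f i).1)
  simp only [bipartiteAbove, bipartiteBelow, filter_univ_mem] at this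
  simp [occurrences, this, (f _).2]

variable {f}

theorem isCyclicallyStable_occurrences (hf : ∀ i, (kneserGraph N r).Adj (f i) (f (i + 1)))
    (x : Fin N) : IsCyclicallyStable (occurrences f x) := by
  intro i hi hi₁
  simp only [occurrences, mem_filter, mem_univ, true_and] at hi hi₁
  exact disjoint_left.mp (hf i).1 hi hi₁

theorem two_mul_length_mul_le (hn : Odd n) (hf : ∀ i, (kneserGraph N r).Adj (f i) (f (i + 1))) :
    2 * (n * r) ≤ N * (n - 1) := by
  have hle : ∀ x, 2 * #(occurrences f x) ≤ n - 1 := by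
    intro x
    have := (isCyclicallyStable_occurrences hf x).two_mul_card_le
    obtain ⟨t, rfl⟩ := hn
    omega
  calc 2 * (n * r) = ∑ x, 2 * #(occurrences f x) := by rw [← mul_sum, sum_card_occurrences]
    _ ≤ ∑ _x : Fin N, (n - 1) := sum_le_sum fun x _ => hle x
    _ = N * (n - 1) := by simp

theorem card_occurrences_eq {t : ℕ} (hn : n = 2 * t + 1) (hr : n * r = N * t)
    (hf : ∀ i, (kneserGraph N r).Adj (f i) (f (i + 1))) (x : Fin N) :
    #(occurrences f x) = t := by
  have hle : ∀ x, #(occurrences f x) ≤ t := by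
    intro x
    have := (isCyclicallyStable_occurrences hf x).two_mul_card_le
    omega
  refine (sum_eq_sum_iff_of_le fun x _ => hle x).mp ?_ x (mem_univ x)
  simp [sum_card_occurrences, hr]

end Occurrences

section Cycle

theorem SimpleGraph.IsCycleMap.map {V W : Type*} {G : SimpleGraph V} {H : SimpleGraph W}
    (φ : G ↪g H) {n : ℕ} {f : ZMod n → V} (hf : G.IsCycleMap f) : H.IsCycleMap (φ ∘ f) :=
  ⟨φ.injective.comp hf.1, fun i => φ.map_adj_iff.mpr (hf.2 i)⟩

def kneserGraphBlowup {m : ℕ} (n k : ℕ) (hm : 0 < m) :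
    kneserGraph n k ↪g kneserGraph (m * n) (m * k) where
  toFun A := ⟨(univ ×ˢ A.1).map finProdFinEquiv.toEmbedding, by simp [A.2]⟩
  inj' A B h := by
    have hne : (univ : Finset (Fin m)).Nonempty := ⟨⟨0, hm⟩, mem_univ _⟩
    have h' := map_injective _ (congrArg Subtype.val h)
    exact Subtype.ext (by rw [← product_image_snd (t := A.1) hne, h', product_image_snd hne])
  map_rel_iff' {A B} := by
    have hne : (univ : Finset (Fin m)).Nonempty := ⟨⟨0, hm⟩, mem_univ _⟩
    have hdisj : Disjoint ((univ ×ˢ A.1 : Finset (Fin m × Fin n)).map finProdFinEquiv.toEmbedding)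
        ((univ ×ˢ B.1).map finProdFinEquiv.toEmbedding) ↔ Disjoint A.1 B.1 := by
      simp [disjoint_product, hne.ne_empty]
    simp only [kneserGraph, ne_eq, EmbeddingLike.apply_eq_iff_eq]
    exact and_congr_left fun _ => hdisj

def oddTranslate (k : ℕ) (j : ZMod (2 * k + 1)) : Finset (ZMod (2 * k + 1)) :=
  (range k).image fun e => j + (2 * e + 1 : ℕ)

variable {k : ℕ}

theorem mem_oddTranslate {j x : ZMod (2 * k + 1)} :
    x ∈ oddTranslate k j ↔ ∃ e < k, j + (2 * e + 1 : ℕ) = x := by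
  simp [oddTranslate]

theorem card_oddTranslate (j : ZMod (2 * k + 1)) : #(oddTranslate k j) = k := by
  rw [oddTranslate, card_image_of_injOn, card_range]
  intro a ha b hb h
  have := ZMod.eq_of_add_natCast_eq_add_natCast (by simp at ha; omega) (by simp at hb; omega) h
  omega

theorem disjoint_oddTranslate_add_one (j : ZMod (2 * k + 1)) :
    Disjoint (oddTranslate k j) (oddTranslate k (j + 1)) := by
  rw [disjoint_left]
  rintro _ h₁ h₂
  obtain ⟨a, ha, rfl⟩ := mem_oddTranslate.mp h₁
  obtain ⟨b, hb, h⟩ := mem_oddTranslate.mp h₂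
  have := ZMod.eq_of_add_natCast_eq_add_natCast (j := j) (a := 2 * b + 2) (b := 2 * a + 1)
    (by omega) (by omega) (by push_cast at h ⊢; linear_combination h)
  omega

theorem isCyclicallyStable_oddTranslate (j : ZMod (2 * k + 1)) :
    IsCyclicallyStable (oddTranslate k j) := by
  intro _ h₁ h₂
  obtain ⟨a, ha, rfl⟩ := mem_oddTranslate.mp h₁
  obtain ⟨b, hb, h⟩ := mem_oddTranslate.mp h₂
  have := ZMod.eq_of_add_natCast_eq_add_natCast (j := j) (a := 2 * b + 1) (b := 2 * a + 2)
    (by omega) (by omega) (by push_cast at h ⊢; linear_combination h)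
  omega

theorem sub_one_gap_oddTranslate (j : ZMod (2 * k + 1)) :
    j - 1 ∉ oddTranslate k j ∧ j - 1 + 1 ∉ oddTranslate k j := by
  constructor <;> rintro h <;> obtain ⟨a, ha, h⟩ := mem_oddTranslate.mp h
  · have := ZMod.eq_of_add_natCast_eq_add_natCast (j := j) (a := 2 * a + 2) (b := 0)
      (by omega) (by omega) (by push_cast at h ⊢; linear_combination h)
    omega
  · have := ZMod.eq_of_add_natCast_eq_add_natCast (j := j) (a := 2 * a + 1) (b := 0)
      (by omega) (by omega) (by push_cast at h ⊢; linear_combination h)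
    omega

theorem oddTranslate_injective : Function.Injective (oddTranslate k) := by
  intro j j' h
  have hgap := (isCyclicallyStable_oddTranslate j).existsUnique_gap (by rw [card_oddTranslate])
  have := hgap.unique (sub_one_gap_oddTranslate j) (h ▸ sub_one_gap_oddTranslate j')
  simpa using this

theorem exists_isCycleMap_kneserGraph {m : ℕ} (hm : 0 < m) (hk : 0 < k) :
    ∃ f : ZMod (2 * k + 1) → {A : Finset (Fin (m * (2 * k + 1))) // A.card = m * k},
      (kneserGraph (m * (2 * k + 1)) (m * k)).IsCycleMap f := by
  let e : ZMod (2 * k + 1) ↪ Fin (2 * k + 1) := (ZMod.finEquiv _).symm.toEquiv.toEmbedding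
  let f : ZMod (2 * k + 1) → {A : Finset (Fin (2 * k + 1)) // A.card = k} :=
    fun j => ⟨(oddTranslate k j).map e, by simp [card_oddTranslate]⟩
  have hf_inj : f.Injective := fun j j' h =>
    oddTranslate_injective (map_injective e (congrArg Subtype.val h))
  have : Fact (1 < 2 * k + 1) := ⟨by omega⟩
  have hf : (kneserGraph (2 * k + 1) k).IsCycleMap f := by
    refine ⟨hf_inj, fun i => ⟨?_, hf_inj.ne ?_⟩⟩
    · simpa [f] using disjoint_oddTranslate_add_one i
    · simp
  exact ⟨_, hf.map (kneserGraphBlowup _ _ hm)⟩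

end Cycle

theorem oddGirth_kneserGraph {m k : ℕ} (hm : 0 < m) (hk : 0 < k) :
    oddGirth (kneserGraph (m * (2 * k + 1)) (m * k)) = 2 * k + 1 := by
  obtain ⟨f, hf⟩ := exists_isCycleMap_kneserGraph hm hk
  rw [oddGirth]
  refine le_antisymm (Nat.sInf_le ⟨odd_two_mul_add_one k, f, hf⟩)
    (le_csInf ⟨_, odd_two_mul_add_one k, f, hf⟩ ?_)
  rintro n ⟨hn, g, hg⟩
  have : NeZero n := ⟨hn.pos.ne'⟩
  have hle := two_mul_length_mul_le hn hg.2
  obtain ⟨t, rfl⟩ := hn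
  rw [Nat.add_sub_cancel] at hle
  have : m * k ≤ m * t := by nlinarith
  have := Nat.le_of_mul_le_mul_left this hm
  omega

theorem isAltCycle_orientationOutOf_kneserGraph {m k : ℕ} (hk : 0 < k) (x : Fin (m * (2 * k + 1)))
    {f : ZMod (2 * k + 1) → {A : Finset (Fin (m * (2 * k + 1))) // A.card = m * k}}
    (hf : (kneserGraph (m * (2 * k + 1)) (m * k)).IsCycleMap f) :
    IsAltCycle (orientationOutOf (kneserGraph _ _) fun A => x ∈ A.1).dir f := by
  have : Fact (1 < 2 * k + 1) := ⟨by omega⟩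
  have hS := isCyclicallyStable_occurrences hf.2 x
  refine isAltCycle_of_existsUnique_gap _ hf.2 (S := occurrences f x) (fun i hi => ?_)
    (hS.existsUnique_gap (by rw [card_occurrences_eq rfl (by ring) hf.2]))
  have hx : x ∈ (f i).1 := by simpa [occurrences] using hi
  have hpred := (hf.2 (i - 1)).symm
  rw [sub_add_cancel] at hpred
  exact ⟨orientationOutOf_dir hpred hx (disjoint_left.mp hpred.1 hx),
    orientationOutOf_dir (hf.2 i) hx (disjoint_left.mp (hf.2 i).1 hx)⟩

theorem statement18 (m k : ℕ) (hm : 1 ≤ m) (hk : 1 ≤ k) :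
    oddGirth (kneserGraph (m * (2 * k + 1)) (m * k)) = 2 * k + 1 ∧
      ∃ D : GraphOrientation (kneserGraph (m * (2 * k + 1)) (m * k)),
        ∀ f : ZMod (2 * k + 1) → {A : Finset (Fin (m * (2 * k + 1))) // A.card = m * k},
          (kneserGraph (m * (2 * k + 1)) (m * k)).IsCycleMap f → IsAltCycle D.dir f := by
  let x : Fin (m * (2 * k + 1)) := ⟨0, Nat.mul_pos hm (Nat.succ_pos _)⟩
  exact ⟨oddGirth_kneserGraph hm hk, _, fun f => isAltCycle_orientationOutOf_kneserGraph hk x⟩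
end
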